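/- arXiv:2510.08314 — 2 statements merged into one kernel-verified Lean document; each statement's English description precedes it below -/
import Mathlib

section
/- Let Z be a real-valued random variable and β ∈ (0,1). Define τ* = inf{λ ≥ 0 : P(Z > λ) ≤ β}. If the CDF of Z is continuous, then among all selection functions s taking values in {0,1} with E[s] ≤ β, the function s*(x) = 1{Z(x) > τ*} satisfies the budget constraint E[s*] ≤ β and minimizes E[(1−s)·A + s·B] pointwise-linearly, where A, B are the conditional risks with B − A = −Z; i.e., s* maximizes E[s·Z] subject to E[s] ≤ β. -/
/-! The tail `l ↦ P(Z > l)` is continuous because `Z` has no atoms, so the infimum `τ*` is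
attained and, when `τ* > 0`, the budget is exhausted: `P(Z > τ*) = β`. For any `[0, 1]`-valued
`s`, pointwise `s (Z - τ*) ≤ 1{Z > τ*} (Z - τ*)`; integrating gives
`E[s Z] - τ* E[s] ≤ E[s* Z] - τ* E[s*]`, and `τ* E[s] ≤ τ* β = τ* E[s*]` finishes the proof. -/

open MeasureTheory Filter Topology Set

noncomputable def budgetThreshold (F : ℝ → ℝ) (β : ℝ) : ℝ :=
  sInf {l | 0 ≤ l ∧ F l ≤ β}

section Threshold

variable {F : ℝ → ℝ} {β : ℝ}

lemma budgetThreshold_mem (hF : LowerSemicontinuous F) (hne : ∃ l, 0 ≤ l ∧ F l ≤ β) :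
    budgetThreshold F β ∈ {l | 0 ≤ l ∧ F l ≤ β} :=
  (isClosed_Ici.inter (hF.isClosed_preimage β)).csInf_mem hne ⟨0, fun _ hl => hl.1⟩

lemma le_apply_budgetThreshold (hF : Continuous F) (hpos : 0 < budgetThreshold F β) :
    β ≤ F (budgetThreshold F β) := by
  have hbelow : ∀ l ∈ Ioo 0 (budgetThreshold F β), β ≤ F l := fun l hl => by
    by_contra! h
    exact hl.2.not_ge (csInf_le ⟨0, fun _ hm => hm.1⟩ ⟨hl.1.le, h.le⟩)
  exact ge_of_tendsto ((hF.tendsto _).mono_left nhdsWithin_le_nhds)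
    (eventually_of_mem (Ioo_mem_nhdsLT hpos) hbelow)

end Threshold

section Tail

variable {X : Type*} [MeasurableSpace X] {μ : Measure X} [IsFiniteMeasure μ] {Z : X → ℝ}

lemma tendsto_measureReal_lt_atTop (hZ : Measurable Z) :
    Tendsto (fun l => μ.real {x | l < Z x}) atTop (𝓝 0) := by
  have hempty : ⋂ l : ℝ, {x | l < Z x} = ∅ :=
    eq_empty_of_forall_notMem fun x hx => lt_irrefl (Z x) (mem_iInter.1 hx (Z x))
  have h := tendsto_measure_iInter_atTop (μ := μ) (s := fun l : ℝ => {x | l < Z x})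
    (fun l => (measurableSet_lt measurable_const hZ).nullMeasurableSet)
    (fun _ _ hab _ hx => hab.trans_lt hx) ⟨0, measure_ne_top μ _⟩
  rw [hempty, measure_empty] at h
  exact (ENNReal.tendsto_toReal ENNReal.zero_ne_top).comp h

lemma continuous_measureReal_lt (hZ : Measurable Z) (hatom : ∀ t, μ {x | Z x = t} = 0) :
    Continuous fun l => μ.real {x | l < Z x} := by
  simp_rw [← integral_indicator_one (μ := μ) (measurableSet_lt measurable_const hZ)]
  refine continuous_iff_continuousAt.2 fun l₀ =>
    continuousAt_of_dominated (bound := fun _ => 1) ?_ ?_ (integrable_const 1) ?_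
  · exact Eventually.of_forall fun _ =>
      (measurable_const.indicator (measurableSet_lt measurable_const hZ)).aestronglyMeasurable
  · exact Eventually.of_forall fun _ => ae_of_all _ fun x =>
      (norm_indicator_le_norm_self _ _).trans (by simp)
  · filter_upwards [ae_iff.2 (by simpa using hatom l₀ : μ {x | ¬Z x ≠ l₀} = 0)] with x hx
    show ContinuousAt ((Iio (Z x)).indicator 1) l₀
    exact continuousOn_const.continuousAt_indicator (by simpa [frontier_Iio, eq_comm] using hx)

end Tail

lemma mul_sub_le_ite_mul_sub {a z t : ℝ} (ha : a ∈ Icc 0 1) :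
    a * (z - t) ≤ (if t < z then 1 else 0) * (z - t) := by
  split_ifs with h
  · nlinarith [ha.2]
  · nlinarith [ha.1]

lemma ae_norm_le_one_of_mem_Icc {X : Type*} [MeasurableSpace X] {μ : Measure X} {s : X → ℝ}
    (hs01 : ∀ x, s x ∈ Icc 0 1) : ∀ᵐ x ∂μ, ‖s x‖ ≤ 1 :=
  ae_of_all _ fun x => (Real.norm_of_nonneg (hs01 x).1).trans_le (hs01 x).2

section Selection

variable {X : Type*} [MeasurableSpace X] {μ : Measure X} [IsFiniteMeasure μ] {Z s : X → ℝ}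

lemma integral_mul_sub_const (hZ : Integrable Z μ) (hs : AEStronglyMeasurable s μ)
    (hs01 : ∀ x, s x ∈ Icc 0 1) (t : ℝ) :
    ∫ x, s x * (Z x - t) ∂μ = ∫ x, s x * Z x ∂μ - t * ∫ x, s x ∂μ := by
  have hbound : ∀ᵐ x ∂μ, ‖s x‖ ≤ 1 := ae_norm_le_one_of_mem_Icc hs01
  simp_rw [mul_sub]
  rw [integral_sub (hZ.bdd_mul hs hbound) ((Integrable.of_bound hs 1 hbound).mul_const t),
    integral_mul_const, mul_comm]

/-- The Neyman–Pearson lemma in Lagrangian form. -/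
theorem integral_mul_le_integral_ite_mul (hZm : Measurable Z) (hZ : Integrable Z μ)
    (hs : AEStronglyMeasurable s μ) (hs01 : ∀ x, s x ∈ Icc 0 1) {t : ℝ}
    (hbudget : t * ∫ x, s x ∂μ ≤ t * μ.real {x | t < Z x}) :
    ∫ x, s x * Z x ∂μ ≤ ∫ x, (if t < Z x then 1 else 0) * Z x ∂μ := by
  have hsel_meas : AEStronglyMeasurable (fun x => if t < Z x then (1 : ℝ) else 0) μ :=
    (Measurable.ite (measurableSet_lt measurable_const hZm) measurable_const
      measurable_const).aestronglyMeasurable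
  have hsel01 : ∀ x, (if t < Z x then (1 : ℝ) else 0) ∈ Icc 0 1 := fun x => by
    split_ifs <;> simp
  have hsel_int : ∫ x, (if t < Z x then (1 : ℝ) else 0) ∂μ = μ.real {x | t < Z x} := by
    rw [← integral_indicator_one (measurableSet_lt measurable_const hZm)]
    simp [indicator_apply]
  have hZt : Integrable (fun x => Z x - t) μ := hZ.sub (integrable_const t)
  have key : ∫ x, s x * (Z x - t) ∂μ ≤ ∫ x, (if t < Z x then 1 else 0) * (Z x - t) ∂μ :=
    integral_mono (hZt.bdd_mul hs (ae_norm_le_one_of_mem_Icc hs01))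
      (hZt.bdd_mul hsel_meas (ae_norm_le_one_of_mem_Icc hsel01))
      fun x => mul_sub_le_ite_mul_sub (hs01 x)
  rw [integral_mul_sub_const hZ hs hs01, integral_mul_sub_const hZ hsel_meas hsel01,
    hsel_int] at key
  linarith

end Selection

/-- Optimal budgeted selection (Theorem 1 core): if `Z` (the conditional risk
gap) has a continuous (atomless) distribution, then the hard threshold
`s*(x) = 1{Z x > τ*}` at `τ* = inf {λ ≥ 0 : P(Z > λ) ≤ β}` satisfies the budget
constraint `E[s*] ≤ β` and maximizes `E[s·Z]` among all {0,1}-valued measurable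
selectors `s` with `E[s] ≤ β`. -/
theorem optimal_budgeted_selector
    {X : Type*} [MeasurableSpace X] (μ : Measure X) [IsProbabilityMeasure μ]
    (Z : X → ℝ) (hZ : Measurable Z) (hZint : Integrable Z μ)
    (hcont : ∀ t : ℝ, μ {x | Z x = t} = 0)
    (β : ℝ) (hβ : β ∈ Set.Ioo (0 : ℝ) 1)
    (τ : ℝ) (hτ : τ = sInf {l : ℝ | 0 ≤ l ∧ (μ {x | Z x > l}).toReal ≤ β}) :
    (μ {x | Z x > τ}).toReal ≤ β ∧
    ∀ s : X → ℝ, Measurable s → (∀ x, s x = 0 ∨ s x = 1) →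
      (∫ x, s x ∂μ) ≤ β →
      ∫ x, s x * Z x ∂μ ≤ ∫ x, (if Z x > τ then (1 : ℝ) else 0) * Z x ∂μ := by
  have hF : Continuous fun l => μ.real {x | l < Z x} := continuous_measureReal_lt hZ hcont
  have hne : ∃ l, 0 ≤ l ∧ μ.real {x | l < Z x} ≤ β :=
    (((tendsto_measureReal_lt_atTop hZ).eventually (ge_mem_nhds hβ.1)).and
      (eventually_ge_atTop 0)).exists.imp fun _ h => h.symm
  change τ = budgetThreshold (fun l => μ.real {x | l < Z x}) β at hτ
  obtain ⟨hτ0, hτβ⟩ := hτ ▸ budgetThreshold_mem hF.lowerSemicontinuous hne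
  refine ⟨hτβ, fun s hs hs01 hsβ => integral_mul_le_integral_ite_mul hZ hZint
    hs.aestronglyMeasurable (fun x => by rcases hs01 x with h | h <;> simp [h]) ?_⟩
  rcases hτ0.eq_or_lt with rfl | hτpos
  · simp
  · have hβτ : β ≤ μ.real {x | τ < Z x} :=
      hτ ▸ le_apply_budgetThreshold hF (hτ ▸ hτpos)
    exact mul_le_mul_of_nonneg_left (hsβ.trans hβτ) hτ0
end

section
/- Define the 0-1 ask-loss L(f, g, s; x, h, y) = 1{f(x) ≠ y}·1{s(x)=0} + 1{g(x,h) ≠ y}·1{s(x)=1} and the surrogate L̃(f̃, g̃, s̃; x, h, y) = ℓ(p_f)·ℓs(−s̃(x)) + ℓ(p_g)·ℓs(s̃(x)), where p_f, p_g are the true-class softmax probabilities of the logits f̃(x), g̃(x,h), s(x) = 1{s̃(x) > 0}, ℓ : [0,1] → [0,1] is non-increasing with ℓ(2/3) > 0, and ℓs : ℝ → [0,1] is monotone with ℓs(v) + ℓs(−v) = 1. Then for every (x, h, y) and every f, g, s: L(f, g, s; x, h, y) ≤ L̃(f̃, g̃, s̃; x, h, y) / ((1/2)·ℓ(2/3)).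 -/
/-!
If the active branch misclassifies `y`, the true class competes with a different argmax class,
so its softmax probability is at most `1/2 ≤ 2/3` and its loss `ℓ(p)` is at least `ℓ(2/3)`;
meanwhile the selector is on that branch's side of `0`, so by the symmetry `ℓs(v) + ℓs(-v) = 1`
and monotonicity its weight is at least `1/2`. Hence the active summand of the surrogate alone
is at least `(1/2) ℓ(2/3)`, and the other summand is nonnegative.
-/

/-- The softmax probability of class `y` for a logit vector `t`. -/
noncomputable def softmax {Y : Type*} [Fintype Y] (t : Y → ℝ) (y : Y) : ℝ :=
  Real.exp (t y) / ∑ y' : Y, Real.exp (t y')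

section Softmax

variable {Y : Type*} [Fintype Y]

lemma sum_exp_pos (t : Y → ℝ) (y : Y) : 0 < ∑ y' : Y, Real.exp (t y') :=
  Finset.sum_pos (fun _ _ => Real.exp_pos _) ⟨y, Finset.mem_univ y⟩

lemma softmax_mem_Icc (t : Y → ℝ) (y : Y) : softmax t y ∈ Set.Icc (0 : ℝ) 1 :=
  ⟨div_nonneg (Real.exp_pos _).le (sum_exp_pos t y).le,
    (div_le_one (sum_exp_pos t y)).mpr
      (Finset.single_le_sum (fun _ _ => (Real.exp_pos _).le) (Finset.mem_univ y))⟩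

lemma softmax_le_half_of_ne_argmax (t : Y → ℝ) {y ym : Y} (hne : y ≠ ym)
    (hmax : ∀ y', t y' ≤ t ym) : softmax t y ≤ 1 / 2 := by
  have hpair : Real.exp (t y) + Real.exp (t ym) ≤ ∑ y' : Y, Real.exp (t y') :=
    Finset.add_le_sum (fun _ _ => (Real.exp_pos _).le) (Finset.mem_univ y)
      (Finset.mem_univ ym) hne
  have hle : Real.exp (t y) ≤ Real.exp (t ym) := Real.exp_le_exp.mpr (hmax y)
  rw [softmax, div_le_iff₀ (sum_exp_pos t y)]
  linarith

end Softmax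

lemma half_le_of_monotone_of_add_neg_eq_one {φ : ℝ → ℝ} (hmono : Monotone φ)
    (hsym : ∀ v, φ v + φ (-v) = 1) {v : ℝ} (hv : 0 ≤ v) : 1 / 2 ≤ φ v := by
  have hle : φ (-v) ≤ φ v := hmono (by linarith)
  linarith [hsym v]

lemma half_mul_le_surrogate_term_of_ne_argmax {Y : Type*} [Fintype Y]
    {l ls : ℝ → ℝ} (hl_anti : AntitoneOn l (Set.Icc (0 : ℝ) 1)) (hl23 : 0 ≤ l (2 / 3))
    (hls_mono : Monotone ls) (hls_sym : ∀ v, ls v + ls (-v) = 1)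
    {t : Y → ℝ} {y ym : Y} (hne : ym ≠ y) (hmax : ∀ y', t y' ≤ t ym) {v : ℝ} (hv : 0 ≤ v) :
    1 / 2 * l (2 / 3) ≤ l (softmax t y) * ls v := by
  have hp : softmax t y ≤ 1 / 2 := softmax_le_half_of_ne_argmax t (Ne.symm hne) hmax
  have hl : l (2 / 3) ≤ l (softmax t y) :=
    hl_anti (softmax_mem_Icc t y) (by norm_num) (by linarith)
  have hls : 1 / 2 ≤ ls v := half_le_of_monotone_of_add_neg_eq_one hls_mono hls_sym hv
  calc 1 / 2 * l (2 / 3) = l (2 / 3) * (1 / 2) := mul_comm _ _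
    _ ≤ l (softmax t y) * ls v := mul_le_mul hl hls (by norm_num) (hl23.trans hl)

theorem surrogate_upper_bounds_ask_loss_general
    {X H : Type*} {Y : Type*} [Fintype Y] [DecidableEq Y]
    (ft : X → Y → ℝ) (gt : X → H → Y → ℝ) (st : X → ℝ)
    (f : X → Y) (g : X → H → Y)
    (hf_argmax : ∀ x : X, ∀ y' : Y, ft x y' ≤ ft x (f x))
    (hg_argmax : ∀ (x : X) (h : H), ∀ y' : Y, gt x h y' ≤ gt x h (g x h))
    (l : ℝ → ℝ) (hl_anti : AntitoneOn l (Set.Icc (0 : ℝ) 1))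
    (hl_range : ∀ p ∈ Set.Icc (0 : ℝ) 1, l p ∈ Set.Icc (0 : ℝ) 1)
    (hl23 : 0 < l (2 / 3))
    (ls : ℝ → ℝ) (hls_range : ∀ v : ℝ, ls v ∈ Set.Icc (0 : ℝ) 1)
    (hls_mono : Monotone ls)
    (hls_sym : ∀ v : ℝ, ls v + ls (-v) = 1) :
    ∀ (x : X) (h : H) (y : Y),
      (if f x ≠ y then (1 : ℝ) else 0) * (if st x > 0 then (0 : ℝ) else 1)
        + (if g x h ≠ y then (1 : ℝ) else 0) * (if st x > 0 then (1 : ℝ) else 0)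
      ≤ (l (softmax (ft x) y) * ls (-(st x)) + l (softmax (gt x h) y) * ls (st x))
          / ((1 / 2) * l (2 / 3)) := by
  intro x h y
  have hterm_nonneg : ∀ (t : Y → ℝ) (v : ℝ), 0 ≤ l (softmax t y) * ls v := fun t v =>
    mul_nonneg (hl_range _ (softmax_mem_Icc t y)).1 (hls_range v).1
  have hf := hterm_nonneg (ft x) (-st x)
  have hg := hterm_nonneg (gt x h) (st x)
  rw [le_div_iff₀ (by positivity)]
  by_cases hs : st x > 0
  · simp only [hs, if_true, mul_zero, zero_add, mul_one]
    split_ifs with hgy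
    · linarith [half_mul_le_surrogate_term_of_ne_argmax hl_anti hl23.le hls_mono hls_sym
        hgy (hg_argmax x h) hs.le]
    · linarith
  · simp only [hs, if_false, mul_zero, add_zero, mul_one]
    split_ifs with hfy
    · linarith [half_mul_le_surrogate_term_of_ne_argmax hl_anti hl23.le hls_mono hls_sym
        hfy (hf_argmax x) (neg_nonneg.mpr (not_lt.mp hs))]
    · linarith

/-- Pointwise upper-bound lemma in the proof of Theorem 2 (all six cases):
the normalized surrogate ask-loss uniformly upper bounds the 0-1 ask-loss.
Predictions `f x`, `g x h` are argmaxes of the logits `ft x`, `gt x h`, and the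
selector is `s(x) = 1{s̃(x) > 0}`. -/
theorem surrogate_upper_bounds_ask_loss
    {X H : Type*} {Y : Type*} [Fintype Y] [DecidableEq Y] (hY : 2 ≤ Fintype.card Y)
    (ft : X → Y → ℝ) (gt : X → H → Y → ℝ) (st : X → ℝ)
    (f : X → Y) (g : X → H → Y)
    (hf_argmax : ∀ x : X, ∀ y' : Y, ft x y' ≤ ft x (f x))
    (hg_argmax : ∀ (x : X) (h : H), ∀ y' : Y, gt x h y' ≤ gt x h (g x h))
    (l : ℝ → ℝ) (hl_anti : AntitoneOn l (Set.Icc (0 : ℝ) 1))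
    (hl_range : ∀ p ∈ Set.Icc (0 : ℝ) 1, l p ∈ Set.Icc (0 : ℝ) 1)
    (hl23 : 0 < l (2 / 3))
    (ls : ℝ → ℝ) (hls_range : ∀ v : ℝ, ls v ∈ Set.Icc (0 : ℝ) 1)
    (hls_mono : Monotone ls)
    (hls_sym : ∀ v : ℝ, ls v + ls (-v) = 1) :
    ∀ (x : X) (h : H) (y : Y),
      (if f x ≠ y then (1 : ℝ) else 0) * (if st x > 0 then (0 : ℝ) else 1)
        + (if g x h ≠ y then (1 : ℝ) else 0) * (if st x > 0 then (1 : ℝ) else 0)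
      ≤ (l (softmax (ft x) y) * ls (-(st x)) + l (softmax (gt x h) y) * ls (st x))
          / ((1 / 2) * l (2 / 3)) :=
  surrogate_upper_bounds_ask_loss_general ft gt st f g hf_argmax hg_argmax l hl_anti hl_range hl23
    ls hls_range hls_mono hls_sym
end
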